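/- Let G be a group acting on categories A and C, and let i : A → C be a weak G-functor which is fully faithful and admits a left adjoint p : C → A. Then the induced functor i^G : A^G → C^G on categories of equivariant objects is fully faithful and admits a left adjoint, namely p^G where p is given the weak G-structure obtained from that of i by taking mates along the adjunction p ⊣ i. -/

import Mathlib

/-! The mates `ρ_g ∘ p → p ∘ ρ_g` of the isomorphisms `δ_g` of `i` are isomorphisms because each
`ρ_g` is an equivalence, and they satisfy the pentagon because transposing it along `p ⊣ i`
turns it into the pentagon of `i`. Because the two structures are mates, the unit and counit of
`p ⊣ i` are equivariant, so the adjunction lifts to equivariant objects. Finally, a morphism `f`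
with `i f` equivariant is itself equivariant when `i` is faithful, so `i^G` inherits full
faithfulness from `i`. -/

open CategoryTheory

universe v₁ v₂ v₃ u₁ u₂ u₃

/-- A (weak) action of a group `G` on a category `C`: autoequivalences `ρ g` together with
isomorphisms `φ g h : ρ g ∘ ρ h ≅ ρ (g * h)` satisfying the associativity axiom. -/
structure GrpAction (G : Type*) [Group G] (C : Type u₁) [Category.{v₁} C] where
  ρ : G → C ⥤ C
  isEquiv : ∀ g : G, (ρ g).IsEquivalence
  φ : ∀ g h : G, ρ h ⋙ ρ g ≅ ρ (g * h)
  assoc : ∀ (g h k : G) (x : C),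
    (ρ g).map ((φ h k).hom.app x) ≫ (φ g (h * k)).hom.app x =
      (φ g h).hom.app ((ρ k).obj x) ≫ (φ (g * h) k).hom.app x ≫
        eqToHom (by rw [mul_assoc])

variable {G : Type*} [Group G]
variable {C : Type u₁} [Category.{v₁} C] {D : Type u₂} [Category.{v₂} D]
  {E : Type u₃} [Category.{v₃} E]

/-- A right lax `G`-functor structure on `Φ : C ⥤ D`: natural transformations
`δ g : ρ g ∘ Φ ⟶ Φ ∘ ρ g` satisfying the pentagon axiom. -/
structure RightLaxStr (σ : GrpAction G C) (τ : GrpAction G D) (Φ : C ⥤ D) where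
  δ : ∀ g : G, Φ ⋙ τ.ρ g ⟶ σ.ρ g ⋙ Φ
  pentagon : ∀ (g h : G) (x : C),
    (τ.φ g h).hom.app (Φ.obj x) ≫ (δ (g * h)).app x =
      (τ.ρ g).map ((δ h).app x) ≫ (δ g).app ((σ.ρ h).obj x) ≫
        Φ.map ((σ.φ g h).hom.app x)

/-- A left lax `G`-functor structure on `Φ : C ⥤ D`: natural transformations
`δ g : Φ ∘ ρ g ⟶ ρ g ∘ Φ` satisfying the dual pentagon axiom. -/
structure LeftLaxStr (σ : GrpAction G C) (τ : GrpAction G D) (Φ : C ⥤ D) where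
  δ : ∀ g : G, σ.ρ g ⋙ Φ ⟶ Φ ⋙ τ.ρ g
  pentagon : ∀ (g h : G) (x : C),
    (δ g).app ((σ.ρ h).obj x) ≫ (τ.ρ g).map ((δ h).app x) ≫
        (τ.φ g h).hom.app (Φ.obj x) =
      Φ.map ((σ.φ g h).hom.app x) ≫ (δ (g * h)).app x

/-- A weak `G`-functor structure on `Φ : C ⥤ D`: natural isomorphisms
`δ g : ρ g ∘ Φ ≅ Φ ∘ ρ g` satisfying the pentagon axiom. -/
structure WeakStr (σ : GrpAction G C) (τ : GrpAction G D) (Φ : C ⥤ D) where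
  δ : ∀ g : G, Φ ⋙ τ.ρ g ≅ σ.ρ g ⋙ Φ
  pentagon : ∀ (g h : G) (x : C),
    (τ.φ g h).hom.app (Φ.obj x) ≫ (δ (g * h)).hom.app x =
      (τ.ρ g).map ((δ h).hom.app x) ≫ (δ g).hom.app ((σ.ρ h).obj x) ≫
        Φ.map ((σ.φ g h).hom.app x)

/-- A `G`-equivariant object: an object `c` with isomorphisms `θ g : c ≅ ρ g c`
compatible with the group action. -/
structure EquivObj (σ : GrpAction G C) where
  c : C
  θ : ∀ g : G, c ≅ (σ.ρ g).obj c
  compat : ∀ g h : G,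
    (θ (g * h)).hom = (θ g).hom ≫ (σ.ρ g).map ((θ h).hom) ≫ (σ.φ g h).hom.app c

/-- Morphisms of equivariant objects: morphisms of underlying objects commuting with
the linearizations. -/
@[ext]
structure EquivHom {σ : GrpAction G C} (x y : EquivObj σ) where
  f : x.c ⟶ y.c
  comm : ∀ g : G, (x.θ g).hom ≫ (σ.ρ g).map f = f ≫ (y.θ g).hom

instance EquivObj.category (σ : GrpAction G C) : Category (EquivObj σ) where
  Hom x y := EquivHom x y
  id x := ⟨𝟙 x.c, by intro g; simp⟩
  comp u v := ⟨u.f ≫ v.f, by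
    intro g
    rw [Functor.map_comp, ← Category.assoc, u.comm, Category.assoc, v.comm,
      ← Category.assoc]⟩
  id_comp u := by apply EquivHom.ext; exact Category.id_comp u.f
  comp_id u := by apply EquivHom.ext; exact Category.comp_id u.f
  assoc u v w := by apply EquivHom.ext; exact Category.assoc u.f v.f w.f

@[simp] lemma EquivObj.id_f {σ : GrpAction G C} (x : EquivObj σ) :
    (𝟙 x : EquivHom x x).f = 𝟙 x.c := rfl

@[simp] lemma EquivObj.comp_f {σ : GrpAction G C} {x y z : EquivObj σ}
    (u : x ⟶ y) (v : y ⟶ z) : (u ≫ v).f = u.f ≫ v.f := rfl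

@[ext] lemma EquivObj.hom_ext {σ : GrpAction G C} {x y : EquivObj σ}
    (u v : x ⟶ y) (h : u.f = v.f) : u = v := EquivHom.ext h

/-- The forgetful functor from equivariant objects. -/
def equivForget (σ : GrpAction G C) : EquivObj σ ⥤ C where
  obj x := x.c
  map u := u.f

namespace WeakStr

variable {σ : GrpAction G C} {τ : GrpAction G D} {Φ : C ⥤ D}

/-- The lift of an equivariant object along a weak `G`-functor. -/
def liftObj (W : WeakStr σ τ Φ) (a : EquivObj σ) : EquivObj τ where
  c := Φ.obj a.c
  θ g := Φ.mapIso (a.θ g) ≪≫ ((W.δ g).app a.c).symm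
  compat g h := by
    have nat : (W.δ g).inv.app a.c ≫ (τ.ρ g).map (Φ.map (a.θ h).hom) =
        Φ.map ((σ.ρ g).map (a.θ h).hom) ≫ (W.δ g).inv.app ((σ.ρ h).obj a.c) :=
      ((W.δ g).inv.naturality (a.θ h).hom).symm
    have pent : (W.δ g).inv.app ((σ.ρ h).obj a.c) ≫
        (τ.ρ g).map ((W.δ h).inv.app a.c) ≫ (τ.φ g h).hom.app (Φ.obj a.c) =
        Φ.map ((σ.φ g h).hom.app a.c) ≫ (W.δ (g * h)).inv.app a.c := by
      rw [← Iso.app_inv, ← Iso.app_inv, ← Iso.app_inv, Iso.eq_comp_inv]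
      simp only [Iso.app_inv, Iso.app_hom, Category.assoc]
      rw [W.pentagon g h a.c]
      slice_lhs 2 3 => rw [← Functor.map_comp, Iso.inv_hom_id_app]
      simp
    simp only [Iso.trans_hom, Functor.mapIso_hom, Iso.symm_hom, Iso.app_inv,
      Functor.map_comp, Category.assoc]
    rw [a.compat g h]
    simp only [Functor.map_comp, Category.assoc]
    rw [reassoc_of% nat, pent]

/-- The induced functor between categories of equivariant objects. -/
def equivFunctor (W : WeakStr σ τ Φ) : EquivObj σ ⥤ EquivObj τ where
  obj := W.liftObj
  map {a b} u := ⟨Φ.map u.f, by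
    intro g
    have nat : (W.δ g).inv.app a.c ≫ (τ.ρ g).map (Φ.map u.f) =
        Φ.map ((σ.ρ g).map u.f) ≫ (W.δ g).inv.app b.c :=
      ((W.δ g).inv.naturality u.f).symm
    simp only [liftObj, Iso.trans_hom, Functor.mapIso_hom, Iso.symm_hom, Iso.app_inv,
      Category.assoc]
    rw [nat, ← Category.assoc, ← Φ.map_comp, u.comm g, Φ.map_comp,
      Category.assoc]⟩
  map_id a := by apply EquivObj.hom_ext; simp [liftObj]
  map_comp u v := by apply EquivObj.hom_ext; simp [liftObj]

end WeakStr

universe v₄ u₄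

section Mates

variable {B : Type u₄} [Category.{v₄} B]

/-- The iterated mate along the adjoint equivalences `U ⊣ U⁻¹` and `V ⊣ V⁻¹` is a conjugate. -/
lemma isIso_mateEquiv_symm {U : C ⥤ E} {V : D ⥤ B} {L₁ : C ⥤ D} {R₁ : D ⥤ C}
    {L₂ : E ⥤ B} {R₂ : B ⥤ E} (adj₁ : L₁ ⊣ R₁) (adj₂ : L₂ ⊣ R₂) (β : TwoSquare R₁ V U R₂)
    [IsIso β.natTrans] [U.IsEquivalence] [V.IsEquivalence] :
    IsIso ((mateEquiv adj₁ adj₂).symm β).natTrans := by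
  let adjU : U ⊣ U.inv := U.asEquivalence.toAdjunction
  let adjV : V ⊣ V.inv := V.asEquivalence.toAdjunction
  have iterated := iterated_mateEquiv_conjugateEquiv adj₁ adj₂ adjU adjV
    ((mateEquiv adj₁ adj₂).symm β)
  rw [Equiv.apply_symm_apply] at iterated
  have : IsIso (mateEquiv adjV adjU β).natTrans := by
    dsimp [mateEquiv]
    infer_instance
  rw [iterated] at this
  exact conjugateEquiv_of_iso (adj₁.comp adjV) (adjU.comp adj₂) _

end Mates

instance GrpAction.isEquivalence_ρ (σ : GrpAction G C) (g : G) : (σ.ρ g).IsEquivalence :=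
  σ.isEquiv g

def WeakStr.toRightLaxStr {σ : GrpAction G C} {τ : GrpAction G D} {Φ : C ⥤ D}
    (W : WeakStr σ τ Φ) : RightLaxStr σ τ Φ :=
  ⟨fun g => (W.δ g).hom, W.pentagon⟩

noncomputable def LeftLaxStr.toWeakStr {σ : GrpAction G C} {τ : GrpAction G D} {Φ : C ⥤ D}
    (L : LeftLaxStr σ τ Φ) [∀ g, IsIso (L.δ g)] : WeakStr σ τ Φ where
  δ g := (asIso (L.δ g)).symm
  pentagon g h x := by
    simp only [Iso.symm_hom, asIso_inv, NatIso.isIso_inv_app, Functor.comp_obj]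
    rw [IsIso.comp_inv_eq, Category.assoc, Category.assoc, ← L.pentagon,
      IsIso.inv_hom_id_assoc, ← Functor.map_comp_assoc, IsIso.inv_hom_id,
      (τ.ρ g).map_id, Category.id_comp]

namespace RightLaxStr

variable {A : Type u₃} [Category.{v₃} A] {α : GrpAction G A} {σ : GrpAction G C}
  {i : A ⥤ C} {p : C ⥤ A}

def mate (R : RightLaxStr α σ i) (adj : p ⊣ i) : LeftLaxStr σ α p where
  δ g := (mateEquiv adj adj).symm (R.δ g)
  pentagon g h x := by
    have unit_mate : ∀ (k : G) (y : C), (σ.ρ k).map (adj.unit.app y) ≫ (R.δ k).app (p.obj y) =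
        adj.unit.app _ ≫ i.map (((mateEquiv adj adj).symm (R.δ k)).app y) :=
      fun k y => unit_mateEquiv_symm adj adj (R.δ k) y
    -- transposed along `p ⊣ i`, each mate turns back into the corresponding component of `δ`
    apply (adj.homEquiv _ _).injective
    simp only [Adjunction.homEquiv_unit, Functor.comp_obj, Functor.map_comp]
    calc _ = (σ.ρ g).map (adj.unit.app ((σ.ρ h).obj x)) ≫ (R.δ g).app (p.obj ((σ.ρ h).obj x)) ≫
          i.map ((α.ρ g).map (((mateEquiv adj adj).symm (R.δ h)).app x)) ≫
          i.map ((α.φ g h).hom.app (p.obj x)) := by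
          rw [← reassoc_of% unit_mate]
      _ = (σ.ρ g).map (adj.unit.app ((σ.ρ h).obj x) ≫
            i.map (((mateEquiv adj adj).symm (R.δ h)).app x)) ≫
          (R.δ g).app ((α.ρ h).obj (p.obj x)) ≫ i.map ((α.φ g h).hom.app (p.obj x)) := by
          have := (R.δ g).naturality (((mateEquiv adj adj).symm (R.δ h)).app x)
          dsimp only [Functor.comp_map] at this
          rw [Functor.map_comp, Category.assoc, reassoc_of% this]
      _ = (σ.ρ g).map ((σ.ρ h).map (adj.unit.app x)) ≫ (σ.φ g h).hom.app (i.obj (p.obj x)) ≫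
          (R.δ (g * h)).app (p.obj x) := by
          rw [← unit_mate, Functor.map_comp, Category.assoc, R.pentagon]
      _ = (σ.φ g h).hom.app x ≫ adj.unit.app ((σ.ρ (g * h)).obj x) ≫
          i.map (((mateEquiv adj adj).symm (R.δ (g * h))).app x) := by
          have := (σ.φ g h).hom.naturality (adj.unit.app x)
          dsimp only [Functor.comp_map, Functor.id_map] at this
          rw [reassoc_of% this, unit_mate]
      _ = _ := by
          rw [adj.unit_naturality_assoc]

end RightLaxStr

namespace WeakStr

section FullyFaithful

variable {σ : GrpAction G C} {τ : GrpAction G D} {Φ : C ⥤ D} (W : WeakStr σ τ Φ)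

@[simp] lemma liftObj_c (a : EquivObj σ) : (W.liftObj a).c = Φ.obj a.c := rfl

@[simp] lemma liftObj_θ_hom (a : EquivObj σ) (g : G) :
    ((W.liftObj a).θ g).hom = Φ.map (a.θ g).hom ≫ (W.δ g).inv.app a.c := rfl

@[simp] lemma equivFunctor_obj (a : EquivObj σ) : W.equivFunctor.obj a = W.liftObj a := rfl

lemma map_comm_iff [Φ.Faithful] {a b : EquivObj σ} (f : a.c ⟶ b.c) (g : G) :
    Φ.map (a.θ g).hom ≫ (W.δ g).inv.app a.c ≫ (τ.ρ g).map (Φ.map f) =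
        Φ.map f ≫ Φ.map (b.θ g).hom ≫ (W.δ g).inv.app b.c ↔
      (a.θ g).hom ≫ (σ.ρ g).map f = f ≫ (b.θ g).hom := by
  have nat : (W.δ g).inv.app a.c ≫ (τ.ρ g).map (Φ.map f) =
      Φ.map ((σ.ρ g).map f) ≫ (W.δ g).inv.app b.c :=
    ((W.δ g).inv.naturality f).symm
  rw [nat, ← Φ.map_comp_assoc, ← Φ.map_comp_assoc, cancel_mono, Φ.map_injective.eq_iff]

lemma equivFunctor_faithful [Φ.Faithful] : W.equivFunctor.Faithful where
  map_injective h := EquivObj.hom_ext _ _ (Φ.map_injective (congrArg EquivHom.f h))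

lemma equivFunctor_full [Φ.Full] [Φ.Faithful] : W.equivFunctor.Full where
  map_surjective {a b} w := by
    obtain ⟨f, hf⟩ := Φ.map_surjective w.f
    refine ⟨⟨f, fun g => (W.map_comm_iff f g).1 ?_⟩, EquivObj.hom_ext _ _ hf⟩
    simpa [hf] using w.comm g

end FullyFaithful

section LeftAdjoint

variable {A : Type u₃} [Category.{v₃} A] {α : GrpAction G A} {σ : GrpAction G C}
  {i : A ⥤ C} {p : C ⥤ A}

instance isIso_mate_δ (W : WeakStr α σ i) (adj : p ⊣ i) (g : G) :
    IsIso ((W.toRightLaxStr.mate adj).δ g) :=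
  isIso_mateEquiv_symm adj adj (W.δ g).hom

noncomputable def leftAdjoint (W : WeakStr α σ i) (adj : p ⊣ i) : WeakStr σ α p :=
  (W.toRightLaxStr.mate adj).toWeakStr

lemma leftAdjoint_δ_inv (W : WeakStr α σ i) (adj : p ⊣ i) (g : G) :
    ((W.leftAdjoint adj).δ g).inv = (mateEquiv adj adj).symm (W.δ g).hom :=
  rfl

lemma leftAdjoint_δ_inv_app (W : WeakStr α σ i) (adj : p ⊣ i) (g : G) (x : C) :
    ((W.leftAdjoint adj).δ g).inv.app x =
      p.map ((σ.ρ g).map (adj.unit.app x)) ≫ p.map ((W.δ g).hom.app (p.obj x)) ≫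
        adj.counit.app ((α.ρ g).obj (p.obj x)) := by
  simp [leftAdjoint_δ_inv, mateEquiv]

def equivAdjunction (Wi : WeakStr α σ i) (Wp : WeakStr σ α p) (adj : p ⊣ i)
    (hmate : ∀ g, (Wp.δ g).inv = (mateEquiv adj adj).symm (Wi.δ g).hom) :
    Wp.equivFunctor ⊣ Wi.equivFunctor where
  unit :=
    { app x := ⟨adj.unit.app x.c, fun g => by
        have unit_mate := unit_mateEquiv_symm adj adj (Wi.δ g).hom x.c
        dsimp only [Functor.comp_obj, Functor.id_obj, equivFunctor_obj, liftObj_c, liftObj_θ_hom]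
        rw [hmate, i.map_comp, Category.assoc, adj.unit_naturality_assoc, ← reassoc_of% unit_mate,
          Iso.hom_inv_id_app]
        simp⟩
      naturality _ _ u := EquivObj.hom_ext _ _ (adj.unit.naturality u.f) }
  counit :=
    { app a := ⟨adj.counit.app a.c, fun g => by
        have mate_counit := mateEquiv_counit_symm adj adj (Wi.δ g).hom a.c
        dsimp only [Functor.comp_obj, Functor.id_obj, equivFunctor_obj, liftObj_c, liftObj_θ_hom]
        rw [hmate, Category.assoc, ← mate_counit, ← p.map_comp_assoc, Category.assoc,
          Iso.inv_hom_id_app]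
        simp⟩
      naturality _ _ u := EquivObj.hom_ext _ _ (adj.counit.naturality u.f) }
  left_triangle_components x := EquivObj.hom_ext _ _ (adj.left_triangle_components x.c)
  right_triangle_components a := EquivObj.hom_ext _ _ (adj.right_triangle_components a.c)

end LeftAdjoint

end WeakStr

/-- If `i : A ⥤ C` is a fully faithful weak `G`-functor admitting a left adjoint
`p`, then `i^G : A^G ⥤ C^G` is fully faithful and admits a left adjoint, namely
`p^G`, where `p` carries the weak `G`-structure obtained from that of `i` by taking
mates along the adjunction `p ⊣ i`. -/
theorem WeakStr.fullyFaithful_leftAdjoint_descends {A : Type u₃} [Category.{v₃} A]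
    {α : GrpAction G A} {σ : GrpAction G C} {i : A ⥤ C} (Wi : WeakStr α σ i)
    [i.Full] [i.Faithful] {p : C ⥤ A} (adj : p ⊣ i) :
    ∃ Wp : WeakStr σ α p,
      (∀ (g : G) (x : C),
        (Wp.δ g).inv.app x =
          p.map ((σ.ρ g).map (adj.unit.app x)) ≫
            p.map ((Wi.δ g).hom.app (p.obj x)) ≫
            adj.counit.app ((α.ρ g).obj (p.obj x))) ∧
      Wi.equivFunctor.Full ∧ Wi.equivFunctor.Faithful ∧
      Nonempty (Wp.equivFunctor ⊣ Wi.equivFunctor) :=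
  ⟨Wi.leftAdjoint adj, Wi.leftAdjoint_δ_inv_app adj, Wi.equivFunctor_full,
    Wi.equivFunctor_faithful, ⟨Wi.equivAdjunction _ adj (Wi.leftAdjoint_δ_inv adj)⟩⟩
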